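/- For natural numbers n and m with 0 ≤ m ≤ C(n,2) and n ≥ 1, the natural logarithm of C(C(n,2), m) is at most m·log n + n/2. -/
import Mathlib

theorem log_choose_le (n m : ℕ) (hn : 1 ≤ n) (hm : m ≤ n.choose 2) :
    Real.log ((n.choose 2).choose m) ≤ m * Real.log n + n / 2 := by
  rcases Nat.eq_zero_or_pos m with hm0 | hm1
  · subst hm0
    simp only [Nat.choose_zero_right, Nat.cast_one, Real.log_one, Nat.cast_zero, zero_mul,
      zero_add]
    positivity
  set N := n.choose 2 with hN
  have hmN : (1:ℕ) ≤ N := le_trans hm1 hm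
  have hn2 : 2 ≤ n := by
    by_contra h
    interval_cases n <;> simp_all [hN]
  have hmR : (1:ℝ) ≤ (m:ℝ) := by exact_mod_cast hm1
  have hNR : (0:ℝ) < (N:ℝ) := by exact_mod_cast hmN
  have hnR : (2:ℝ) ≤ (n:ℝ) := by exact_mod_cast hn2
  have hfactpos : (0:ℝ) < (m.factorial : ℝ) := by exact_mod_cast m.factorial_pos
  -- log C ≤ m log N - log m!
  have hC : ((N.choose m : ℕ) : ℝ) ≤ (N:ℝ)^m / m.factorial := Nat.choose_le_pow_div m N
  have hCpos : (0:ℝ) < ((N.choose m : ℕ) : ℝ) := by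
    exact_mod_cast Nat.choose_pos hm
  have h1 : Real.log (N.choose m) ≤ m * Real.log N - Real.log m.factorial := by
    calc Real.log (N.choose m) ≤ Real.log ((N:ℝ)^m / m.factorial) :=
          Real.log_le_log hCpos hC
      _ = m * Real.log N - Real.log m.factorial := by
          rw [Real.log_div (by positivity) (by positivity), Real.log_pow]
  -- m log m - m ≤ log m!
  have h2 : (m:ℝ) * Real.log m - m ≤ Real.log m.factorial := by
    have := Real.pow_div_factorial_le_exp (x := (m:ℝ)) (by positivity) m
    have hlog : Real.log ((m:ℝ)^m / m.factorial) ≤ (m:ℝ) := by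
      calc Real.log ((m:ℝ)^m / m.factorial) ≤ Real.log (Real.exp m) :=
            Real.log_le_log (by positivity) this
        _ = m := Real.log_exp _
    rw [Real.log_div (by positivity) (by positivity), Real.log_pow] at hlog
    push_cast at hlog ⊢
    linarith
  -- log N ≤ 2 log n - log 2
  have hNle : (N:ℝ) ≤ (n:ℝ)^2 / 2 := by
    have : 2 * N ≤ n * n := by
      rw [hN, Nat.choose_two_right]
      have := Nat.div_mul_le_self (n * (n-1)) 2
      calc 2 * (n * (n-1) / 2) = n * (n-1) / 2 * 2 := by ring
        _ ≤ n * (n - 1) := this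
        _ ≤ n * n := Nat.mul_le_mul_left n (Nat.sub_le n 1)
    have : (2:ℝ) * N ≤ (n:ℝ) * n := by exact_mod_cast this
    nlinarith
  have h3 : Real.log N ≤ 2 * Real.log n - Real.log 2 := by
    calc Real.log N ≤ Real.log ((n:ℝ)^2 / 2) := Real.log_le_log hNR hNle
      _ = 2 * Real.log n - Real.log 2 := by
          rw [Real.log_div (by positivity) (by norm_num), Real.log_pow]
          push_cast; ring
  -- log(n/(2m)) ≤ n/(2m) - 1
  have h4 : Real.log ((n:ℝ) / (2 * m)) ≤ (n:ℝ) / (2 * m) - 1 :=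
    Real.log_le_sub_one_of_pos (by positivity)
  have h5 : Real.log ((n:ℝ) / (2 * m)) = Real.log n - Real.log 2 - Real.log m := by
    rw [Real.log_div (by positivity) (by positivity),
      Real.log_mul (by norm_num) (by positivity)]
    ring
  rw [h5] at h4
  have hmpos : (0:ℝ) < m := by linarith
  have h6 : (m:ℝ) * ((n:ℝ) / (2 * m)) = n / 2 := by field_simp
  have h4' : (m:ℝ) * (Real.log n - Real.log 2 - Real.log m) ≤ n / 2 - m := by
    calc (m:ℝ) * (Real.log n - Real.log 2 - Real.log m)
        ≤ (m:ℝ) * ((n:ℝ) / (2 * m) - 1) := by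
          apply mul_le_mul_of_nonneg_left h4 (by positivity)
      _ = n / 2 - m := by rw [mul_sub, h6, mul_one]
  have h3' : (m:ℝ) * Real.log N ≤ (m:ℝ) * (2 * Real.log n - Real.log 2) :=
    mul_le_mul_of_nonneg_left h3 (by positivity)
  nlinarith [h1, h2, h3', h4']
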